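/- Assume condition (c) holds and that Q_T is symmetric positive semidefinite. Let {x_t}_{t≥0} and {u_t}_{t≥0} be sequences such that x_0 ∈ X_0, for each t the control u_t is the first control û_0 of a feasible plan from x_t whose cost attains the infimum V(x_t), and x_{t+1} = A x_t + B u_t. Then Σ_{t=0}^∞ (x_t^T Q x_t + u_t^T R u_t) ≤ V(x_0). -/

import Mathlib

open Matrix Set

/-- A feasible plan of horizon `T` from state `x`. -/
def feasiblePlan {n m : ℕ}
    (A : Matrix (Fin n) (Fin n) ℝ) (B : Matrix (Fin n) (Fin m) ℝ)
    (X : Set (Fin n → ℝ)) (U : Set (Fin m → ℝ)) (XT : Set (Fin n → ℝ)) (T : ℕ)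
    (x : Fin n → ℝ) (xs : ℕ → Fin n → ℝ) (us : ℕ → Fin m → ℝ) : Prop :=
  xs 0 = x ∧
  (∀ k < T, xs (k + 1) = A.mulVec (xs k) + B.mulVec (us k)) ∧
  (∀ k < T, xs k ∈ X) ∧ (∀ k < T, us k ∈ U) ∧ xs T ∈ XT

/-- The cost of a plan. -/
def planCost {n m : ℕ}
    (Q : Matrix (Fin n) (Fin n) ℝ) (R : Matrix (Fin m) (Fin m) ℝ)
    (QT : Matrix (Fin n) (Fin n) ℝ) (T : ℕ)
    (xs : ℕ → Fin n → ℝ) (us : ℕ → Fin m → ℝ) : ℝ :=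
  (∑ k ∈ Finset.range T, (xs k ⬝ᵥ Q.mulVec (xs k) + us k ⬝ᵥ R.mulVec (us k))) +
    xs T ⬝ᵥ QT.mulVec (xs T)

/-- `X₀`: the set of states from which a feasible plan exists. -/
def X0set {n m : ℕ}
    (A : Matrix (Fin n) (Fin n) ℝ) (B : Matrix (Fin n) (Fin m) ℝ)
    (X : Set (Fin n → ℝ)) (U : Set (Fin m → ℝ)) (XT : Set (Fin n → ℝ)) (T : ℕ) :
    Set (Fin n → ℝ) :=
  {x | ∃ xs us, feasiblePlan A B X U XT T x xs us}

/-- `V(x)`: the infimum of the planning cost over feasible plans from `x`. -/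
noncomputable def Vopt {n m : ℕ}
    (A : Matrix (Fin n) (Fin n) ℝ) (B : Matrix (Fin n) (Fin m) ℝ)
    (X : Set (Fin n → ℝ)) (U : Set (Fin m → ℝ)) (XT : Set (Fin n → ℝ))
    (Q : Matrix (Fin n) (Fin n) ℝ) (R : Matrix (Fin m) (Fin m) ℝ)
    (QT : Matrix (Fin n) (Fin n) ℝ) (T : ℕ) (x : Fin n → ℝ) : ℝ :=
  sInf {c | ∃ xs us, feasiblePlan A B X U XT T x xs us ∧ c = planCost Q R QT T xs us}

lemma psd_quad {n : ℕ} {M : Matrix (Fin n) (Fin n) ℝ} (hM : M.PosSemidef) (v : Fin n → ℝ) :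
    0 ≤ v ⬝ᵥ M.mulVec v := by
  have := hM.dotProduct_mulVec_nonneg v; simpa using this

lemma planCost_nonneg {n m : ℕ} {Q : Matrix (Fin n) (Fin n) ℝ} {R : Matrix (Fin m) (Fin m) ℝ}
    {QT : Matrix (Fin n) (Fin n) ℝ} (hQ : Q.PosSemidef) (hRps : R.PosSemidef)
    (hQT : QT.PosSemidef) (T : ℕ) (xs : ℕ → Fin n → ℝ) (us : ℕ → Fin m → ℝ) :
    0 ≤ planCost Q R QT T xs us :=
  add_nonneg (Finset.sum_nonneg fun _ _ =>
    add_nonneg (psd_quad hQ _) (psd_quad hRps _)) (psd_quad hQT _)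

/-- Under condition (c), with `Q ⪰ 0`, `R ≻ 0`, `Q_T ⪰ 0`, the accumulated closed-loop
stage cost of the receding-horizon control law is bounded by `V(x₀)`:
`Σ_{t=0}^∞ (xₜᵀQxₜ + uₜᵀRuₜ) ≤ V(x₀)`. -/
theorem stmt16 {n m : ℕ}
    (A : Matrix (Fin n) (Fin n) ℝ) (B : Matrix (Fin n) (Fin m) ℝ)
    (X : Set (Fin n → ℝ)) (U : Set (Fin m → ℝ))
    (Q : Matrix (Fin n) (Fin n) ℝ) (R : Matrix (Fin m) (Fin m) ℝ)
    (QT : Matrix (Fin n) (Fin n) ℝ) (XT : Set (Fin n → ℝ)) (hXTX : XT ⊆ X)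
    (T : ℕ) (hT : 1 ≤ T)
    (hQ : Q.PosSemidef) (hR : R.PosDef) (hQT : QT.PosSemidef)
    (hc : ∀ x ∈ XT, ∃ u ∈ U, A.mulVec x + B.mulVec u ∈ XT ∧
      (A.mulVec x + B.mulVec u) ⬝ᵥ QT.mulVec (A.mulVec x + B.mulVec u) -
        x ⬝ᵥ QT.mulVec x + x ⬝ᵥ Q.mulVec x + u ⬝ᵥ R.mulVec u ≤ 0)
    (x : ℕ → Fin n → ℝ) (u : ℕ → Fin m → ℝ)
    (hx0 : x 0 ∈ X0set A B X U XT T)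
    (hopt : ∀ t, ∃ xs us, feasiblePlan A B X U XT T (x t) xs us ∧
      planCost Q R QT T xs us = Vopt A B X U XT Q R QT T (x t) ∧ u t = us 0)
    (hdyn : ∀ t, x (t + 1) = A.mulVec (x t) + B.mulVec (u t)) :
    Summable (fun t => x t ⬝ᵥ Q.mulVec (x t) + u t ⬝ᵥ R.mulVec (u t)) ∧
    ∑' t, (x t ⬝ᵥ Q.mulVec (x t) + u t ⬝ᵥ R.mulVec (u t)) ≤
      Vopt A B X U XT Q R QT T (x 0) := by
  obtain ⟨S, rfl⟩ : ∃ S, T = S + 1 := ⟨T - 1, (Nat.succ_pred_eq_of_pos hT).symm⟩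
  have hRps := hR.posSemidef
  set V : (Fin n → ℝ) → ℝ := Vopt A B X U XT Q R QT (S + 1) with hVdef
  have hVnn : ∀ y, 0 ≤ V y := fun y => Real.sInf_nonneg (by
    rintro c ⟨xs, us, _, rfl⟩; exact planCost_nonneg hQ hRps hQT _ xs us)
  have hbdd : ∀ y, BddBelow {c | ∃ xs us, feasiblePlan A B X U XT (S+1) y xs us ∧
      c = planCost Q R QT (S+1) xs us} := fun y => ⟨0, by
    rintro c ⟨xs, us, _, rfl⟩; exact planCost_nonneg hQ hRps hQT _ xs us⟩
  have key : ∀ t, x t ⬝ᵥ Q.mulVec (x t) + u t ⬝ᵥ R.mulVec (u t) + V (x (t+1)) ≤ V (x t) := by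
    intro t
    obtain ⟨xs, us, hfeas, hcost, hu0⟩ := hopt t
    obtain ⟨hx0', hdyn', hX', hU', hXT'⟩ := hfeas
    obtain ⟨w, hwU, hz, hdec⟩ := hc (xs (S+1)) hXT'
    set z : Fin n → ℝ := A.mulVec (xs (S+1)) + B.mulVec w with hzdef
    set xs' : ℕ → Fin n → ℝ := fun k => if k < S + 1 then xs (k+1) else z with hxs'
    set us' : ℕ → Fin m → ℝ := fun k => if k < S then us (k+1) else w with hus'
    have hxs'lt : ∀ k, k < S + 1 → xs' k = xs (k+1) := fun k hk => by simp only [hxs', if_pos hk]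
    have hxs'T : xs' (S+1) = z := by simp [hxs']
    have hus'lt : ∀ k, k < S → us' k = us (k+1) := fun k hk => by simp [hus', hk]
    have hus'S : us' S = w := by simp [hus']
    have hfeas' : feasiblePlan A B X U XT (S+1) (x (t+1)) xs' us' := by
      refine ⟨?_, ?_, ?_, ?_, ?_⟩
      · rw [hxs'lt 0 (by omega), hdyn' 0 (by omega), hx0', ← hu0, hdyn t]
      · intro k hk
        rcases Nat.lt_or_ge k S with h | h
        · rw [hxs'lt (k+1) (by omega), hxs'lt k (by omega), hus'lt k h]
          exact hdyn' (k+1) (by omega)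
        · have hkS : k = S := by omega
          rw [hkS, hxs'T, hxs'lt S (by omega), hus'S]
      · intro k hk
        rw [hxs'lt k hk]
        rcases Nat.lt_or_ge (k+1) (S+1) with h | h
        · exact hX' (k+1) h
        · have : k + 1 = S + 1 := by omega
          rw [this]; exact hXTX hXT'
      · intro k hk
        rcases Nat.lt_or_ge k S with h | h
        · rw [hus'lt k h]; exact hU' (k+1) (by omega)
        · have hkS : k = S := by omega
          rw [hkS, hus'S]; exact hwU
      · rw [hxs'T]; exact hz
    have e1 : planCost Q R QT (S+1) xs' us' =
        (∑ k ∈ Finset.range S,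
          (xs (k+1) ⬝ᵥ Q.mulVec (xs (k+1)) + us (k+1) ⬝ᵥ R.mulVec (us (k+1)))) +
        (xs (S+1) ⬝ᵥ Q.mulVec (xs (S+1)) + w ⬝ᵥ R.mulVec w) + z ⬝ᵥ QT.mulVec z := by
      unfold planCost
      rw [Finset.sum_range_succ, hxs'T]
      congr 2
      · exact Finset.sum_congr rfl fun k hk => by
          have hk' := Finset.mem_range.mp hk
          rw [hxs'lt k (by omega), hus'lt k hk']
      · rw [hxs'lt S (by omega), hus'S]
    have e2 : planCost Q R QT (S+1) xs us =
        (x t ⬝ᵥ Q.mulVec (x t) + u t ⬝ᵥ R.mulVec (u t)) +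
        (∑ k ∈ Finset.range S,
          (xs (k+1) ⬝ᵥ Q.mulVec (xs (k+1)) + us (k+1) ⬝ᵥ R.mulVec (us (k+1)))) +
        xs (S+1) ⬝ᵥ QT.mulVec (xs (S+1)) := by
      unfold planCost
      rw [Finset.sum_range_succ']
      rw [hx0', hu0]
      ring
    have hVle : V (x (t+1)) ≤ planCost Q R QT (S+1) xs' us' :=
      csInf_le (hbdd _) ⟨xs', us', hfeas', rfl⟩
    rw [← hcost]
    rw [e1] at hVle
    rw [e2]
    linarith
  have partial_bound : ∀ N, ∑ t ∈ Finset.range N,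
      (x t ⬝ᵥ Q.mulVec (x t) + u t ⬝ᵥ R.mulVec (u t)) ≤ V (x 0) := by
    intro N
    have h1 : ∑ t ∈ Finset.range N, (x t ⬝ᵥ Q.mulVec (x t) + u t ⬝ᵥ R.mulVec (u t)) ≤
        ∑ t ∈ Finset.range N, (V (x t) - V (x (t+1))) :=
      Finset.sum_le_sum fun t _ => by linarith [key t]
    rw [Finset.sum_range_sub' (fun t => V (x t)) N] at h1
    linarith [hVnn (x N)]
  have hnn : ∀ t, 0 ≤ x t ⬝ᵥ Q.mulVec (x t) + u t ⬝ᵥ R.mulVec (u t) := fun t =>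
    add_nonneg (psd_quad hQ _) (psd_quad hRps _)
  have hsum : Summable (fun t => x t ⬝ᵥ Q.mulVec (x t) + u t ⬝ᵥ R.mulVec (u t)) :=
    summable_of_sum_range_le hnn partial_bound
  exact ⟨hsum, Summable.tsum_le_of_sum_range_le hsum partial_bound⟩
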